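/- arXiv:1112.6201 — 2 statements merged into one kernel-verified Lean document; each statement's English description precedes it below -/
import Mathlib

section
/- Let R be a Noetherian local ring. If R satisfies the condition (GARC), then R satisfies the condition (SAC). -/
/-!
Common definitions: Ext and Tor modules, depth, (maximal) Cohen-Macaulayness,
finite injective dimension, canonical modules, totally reflexive modules,
local freeness on the punctured spectrum, injective hulls of the residue field.
-/

open CategoryTheory TensorProduct IsLocalRing

universe u

/-- The `i`-th Ext module `Ext_R^i(M, N)`, as an object of `ModuleCat R`. -/
noncomputable abbrev extM (R : Type u) [CommRing R] (i : ℕ)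
    (M N : Type u) [AddCommGroup M] [Module R M] [AddCommGroup N] [Module R N] :
    ModuleCat.{u} R :=
  ((Ext R (ModuleCat.{u} R) i).obj (Opposite.op (ModuleCat.of R M))).obj (ModuleCat.of R N)

/-- The `i`-th Tor module `Tor^R_i(M, N)`, as an object of `ModuleCat R`. -/
noncomputable abbrev torM (R : Type u) [CommRing R] (i : ℕ)
    (M N : Type u) [AddCommGroup M] [Module R M] [AddCommGroup N] [Module R N] :
    ModuleCat.{u} R :=
  ((Tor (ModuleCat.{u} R) i).obj (ModuleCat.of R M)).obj (ModuleCat.of R N)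

/-- The depth of a module over a local ring: the least `i` with `Ext^i(k, M) ≠ 0`
(`∞` if no such `i` exists). -/
noncomputable def moduleDepth (R : Type u) [CommRing R] [IsLocalRing R]
    (M : Type u) [AddCommGroup M] [Module R M] : ℕ∞ :=
  sInf ((fun i : ℕ => (i : ℕ∞)) '' {i : ℕ | ¬ Subsingleton (extM R i (ResidueField R) M)})

/-- A finitely generated module of depth equal to the Krull dimension of the ring. -/
def IsMaximalCohenMacaulay (R : Type u) [CommRing R] [IsLocalRing R]
    (M : Type u) [AddCommGroup M] [Module R M] : Prop :=
  Module.Finite R M ∧ (moduleDepth R M : WithBot ℕ∞) = ringKrullDim R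

/-- A module has finite injective dimension iff `Ext^i(R/I, M)` vanishes
for all ideals `I` and all `i` beyond some bound (Baer's criterion). -/
def HasFiniteInjectiveDimension (R : Type u) [CommRing R]
    (M : Type u) [AddCommGroup M] [Module R M] : Prop :=
  ∃ n : ℕ, ∀ I : Ideal R, ∀ i > n, Subsingleton (extM R i (R ⧸ I) M)

/-- A canonical module of a Cohen-Macaulay local ring of dimension `d`:
a maximal Cohen-Macaulay module of finite injective dimension with
`Ext^d(k, ω)` a one-dimensional `k`-vector space (i.e. isomorphic to `k`). -/
def IsCanonicalModule (R : Type u) [CommRing R] [IsLocalRing R]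
    (ω : Type u) [AddCommGroup ω] [Module R ω] : Prop :=
  IsMaximalCohenMacaulay R ω ∧ HasFiniteInjectiveDimension R ω ∧
    ∀ d : ℕ, ringKrullDim R = (d : WithBot ℕ∞) →
      Nonempty ((extM R d (ResidueField R) ω) ≃ₗ[R] ResidueField R)

/-- A totally reflexive module: finitely generated, reflexive, with
`Ext^i(X, R) = 0 = Ext^i(X*, R)` for all `i > 0`. -/
def IsTotallyReflexive (R : Type u) [CommRing R]
    (X : Type u) [AddCommGroup X] [Module R X] : Prop :=
  Module.Finite R X ∧ Module.IsReflexive R X ∧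
    ∀ i > 0, Subsingleton (extM R i X R) ∧ Subsingleton (extM R i (X →ₗ[R] R) R)

/-- `M` is locally free on the punctured spectrum of the local ring `R`. -/
def IsLocallyFreeOnPuncturedSpectrum (R : Type u) [CommRing R] [IsLocalRing R]
    (M : Type u) [AddCommGroup M] [Module R M] : Prop :=
  ∀ (p : Ideal R) [p.IsPrime], p ≠ maximalIdeal R →
    Module.Free (Localization.AtPrime p) (LocalizedModule p.primeCompl M)

/-- `E` is an injective hull of the residue field: `E` is injective and contains
a copy of `k` as an essential submodule. -/
def IsInjectiveHullOfResidueField (R : Type u) [CommRing R] [IsLocalRing R]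
    (E : Type u) [AddCommGroup E] [Module R E] : Prop :=
  Module.Injective R E ∧
    ∃ ι : ResidueField R →ₗ[R] E, Function.Injective ι ∧
      ∀ N : Submodule R E, N ≠ ⊥ → N ⊓ LinearMap.range ι ≠ ⊥

/-- The projective dimension of `M` is at most `n`:
`Ext^i(M, N)` vanishes for all modules `N` and all `i > n`. -/
def ProjDimLE (R : Type u) [CommRing R]
    (M : Type u) [AddCommGroup M] [Module R M] (n : ℕ) : Prop :=
  ∀ (N : Type u) [AddCommGroup N] [Module R N], ∀ i > n, Subsingleton (extM R i M N)

/-- `M` has constant rank `r`: the localization of `M` at every associated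
prime of `R` is free of rank `r`. -/
def HasConstantRank (R : Type u) [CommRing R]
    (M : Type u) [AddCommGroup M] [Module R M] : Prop :=
  ∃ r : ℕ, ∀ (p : Ideal R) [p.IsPrime], p ∈ associatedPrimes R R →
    Nonempty ((LocalizedModule p.primeCompl M) ≃ₗ[Localization p.primeCompl]
      (Fin r → Localization p.primeCompl))

/-- The Auslander-Reiten condition: every finitely generated module `M` with
`Ext^{>0}(M, M ⊕ R) = 0` is free. -/
def SatisfiesARC (R : Type u) [CommRing R] : Prop :=
  ∀ (M : Type u) [AddCommGroup M] [Module R M], Module.Finite R M →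
    (∀ i > 0, Subsingleton (extM R i M (M × R))) → Module.Free R M

/-- The symmetric Auslander condition: for every finitely generated module `M`,
if `Ext^{>0}(M, R) = 0` and `Ext^{≫0}(M, M) = 0`, then `Ext^{>0}(M, M) = 0`. -/
def SatisfiesSAC (R : Type u) [CommRing R] : Prop :=
  ∀ (M : Type u) [AddCommGroup M] [Module R M], Module.Finite R M →
    (∀ i > 0, Subsingleton (extM R i M R)) →
    (∃ n : ℕ, ∀ i > n, Subsingleton (extM R i M M)) →
    ∀ i > 0, Subsingleton (extM R i M M)

/-- The symmetric Auslander condition for modules of constant rank. -/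
def SatisfiesSACC (R : Type u) [CommRing R] : Prop :=
  ∀ (M : Type u) [AddCommGroup M] [Module R M], Module.Finite R M →
    HasConstantRank R M →
    (∀ i > 0, Subsingleton (extM R i M R)) →
    (∃ n : ℕ, ∀ i > n, Subsingleton (extM R i M M)) →
    ∀ i > 0, Subsingleton (extM R i M M)

/-- The generalized Auslander-Reiten condition: every finitely generated module
`M` with `Ext^{>n}(M, M ⊕ R) = 0` has projective dimension at most `n`. -/
def SatisfiesGARC (R : Type u) [CommRing R] : Prop :=
  ∀ (M : Type u) [AddCommGroup M] [Module R M], Module.Finite R M →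
    ∀ n : ℕ, (∀ i > n, Subsingleton (extM R i M (M × R))) → ProjDimLE R M n

/-- The condition (GARC'): every finitely generated module `M` with
`Ext^{≫0}(M, M ⊕ R) = 0` has finite projective dimension. -/
def SatisfiesGARC' (R : Type u) [CommRing R] : Prop :=
  ∀ (M : Type u) [AddCommGroup M] [Module R M], Module.Finite R M →
    (∃ n : ℕ, ∀ i > n, Subsingleton (extM R i M (M × R))) →
    ∃ n : ℕ, ProjDimLE R M n

/-- The Huneke-Wiegand condition: every finitely generated torsionfree module
`M` such that `M ⊗ M*` is reflexive is free. -/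
def SatisfiesHWC (R : Type u) [CommRing R] : Prop :=
  ∀ (M : Type u) [AddCommGroup M] [Module R M], Module.Finite R M →
    (∀ r ∈ nonZeroDivisors R, Function.Injective (fun m : M => r • m)) →
    Module.IsReflexive R (M ⊗[R] (M →ₗ[R] R)) → Module.Free R M

/-!
Downward induction on the degree. If `Ext^{>m}(M, M) = 0` with `m ≥ 1`, then, since also
`Ext^{>0}(M, R) = 0`, we get `Ext^{>m}(M, M ⊕ R) = 0`, so (GARC) gives `pd M ≤ m`. For a
presentation `0 → K → Rᶜ → M → 0`, the long exact sequence of `Ext^*(M, -)` then gives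
`Ext^m(M, M) = 0`, squeezed between `Ext^m(M, Rᶜ) = 0` and `Ext^{m+1}(M, K) = 0`.

The parts of that long exact sequence we need come from applying `Hom(P, -)`, for a projective
resolution `P` of `M`, to a short exact sequence. Because every `Pᵢ` is projective, the result
is a short exact sequence of cochain complexes, and we take its homology sequence.
-/

namespace CategoryTheory

open Limits

variable {R : Type*} [Ring R] {C : Type*} [Category* C] [Abelian C] [Linear R C]

namespace ProjectiveResolution

variable {Z : C} (P : ProjectiveResolution Z) (R)

noncomputable def linearYonedaObjMap {Y Y' : C} (g : Y ⟶ Y') :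
    P.complex.linearYonedaObj R Y ⟶ P.complex.linearYonedaObj R Y' where
  f i := ((linearYoneda R C).map g).app (Opposite.op (P.complex.X i))
  comm' _ _ _ := (((linearYoneda R C).map g).naturality _).symm

noncomputable def linearYonedaObjShortComplex (S : ShortComplex C) :
    ShortComplex (CochainComplex (ModuleCat R) ℕ) :=
  ShortComplex.mk (P.linearYonedaObjMap R S.f) (P.linearYonedaObjMap R S.g) (by
    ext i (φ : P.complex.X i ⟶ S.X₁)
    exact (Category.assoc φ S.f S.g).trans (by rw [S.zero, comp_zero]; rfl))

lemma linearYonedaObjShortComplex_shortExact {S : ShortComplex C} (hS : S.ShortExact) :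
    (P.linearYonedaObjShortComplex R S).ShortExact := by
  refine HomologicalComplex.shortExact_of_degreewise_shortExact _ fun i => ?_
  have := hS.mono_f
  refine ModuleCat.shortComplex_shortExact _ ?_ ?_ ?_
  · intro (φ : P.complex.X i ⟶ S.X₂)
    refine ⟨fun hφ => ?_, ?_⟩
    · exact ⟨hS.exact.lift φ hφ, hS.exact.lift_f φ hφ⟩
    · rintro ⟨ψ, rfl⟩
      exact ShortComplex.moduleCat_zero_apply _ ψ
  · intro (a : P.complex.X i ⟶ S.X₁) (b : P.complex.X i ⟶ S.X₁) hab
    exact (cancel_mono S.f).1 hab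
  · have := hS.epi_g
    intro (ψ : P.complex.X i ⟶ S.X₃)
    exact ⟨Projective.factorThru ψ S.g, Projective.factorThru_comp ψ S.g⟩

end ProjectiveResolution

variable [EnoughProjectives C]

lemma isZero_Ext_of_isZero (Z : C) {Y : C} (hY : IsZero Y) (n : ℕ) :
    IsZero (((Ext R C n).obj (Opposite.op Z)).obj Y) := by
  let P := projectiveResolution Z
  have hHom : IsZero ((P.complex.linearYonedaObj R Y).X n) :=
    ModuleCat.isZero_iff_subsingleton.2 ⟨fun _ _ => hY.eq_of_tgt _ _⟩
  exact IsZero.of_iso (ShortComplex.isZero_homology_of_isZero_X₂ _ hHom) (P.isoExt n Y)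

namespace ShortComplex.ShortExact

variable {S : ShortComplex C}

lemma isZero_Ext_X₂ (hS : S.ShortExact) (Z : C) (n : ℕ)
    (h₁ : IsZero (((Ext R C n).obj (Opposite.op Z)).obj S.X₁))
    (h₃ : IsZero (((Ext R C n).obj (Opposite.op Z)).obj S.X₃)) :
    IsZero (((Ext R C n).obj (Opposite.op Z)).obj S.X₂) := by
  let P := projectiveResolution Z
  have hex := (P.linearYonedaObjShortComplex_shortExact R hS).homology_exact₂ n
  refine IsZero.of_iso (hex.isZero_X₂ ?_ ?_) (P.isoExt n S.X₂)
  · exact (h₁.of_iso (P.isoExt n S.X₁).symm).eq_of_src _ _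
  · exact (h₃.of_iso (P.isoExt n S.X₃).symm).eq_of_tgt _ _

lemma isZero_Ext_X₃ (hS : S.ShortExact) (Z : C) (n : ℕ)
    (h₂ : IsZero (((Ext R C n).obj (Opposite.op Z)).obj S.X₂))
    (h₁ : IsZero (((Ext R C (n + 1)).obj (Opposite.op Z)).obj S.X₁)) :
    IsZero (((Ext R C n).obj (Opposite.op Z)).obj S.X₃) := by
  let P := projectiveResolution Z
  have hex := (P.linearYonedaObjShortComplex_shortExact R hS).homology_exact₃ n (n + 1) rfl
  refine IsZero.of_iso (hex.isZero_X₂ ?_ ?_) (P.isoExt n S.X₃)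
  · exact (h₂.of_iso (P.isoExt n S.X₂).symm).eq_of_src _ _
  · exact (h₁.of_iso (P.isoExt (n + 1) S.X₁).symm).eq_of_tgt _ _

end ShortComplex.ShortExact

end CategoryTheory

section ModuleExt

variable {R : Type u} [CommRing R] {M : Type u} [AddCommGroup M] [Module R M] {n : ℕ}

lemma subsingleton_extM_of_linearEquiv {N N' : Type u} [AddCommGroup N] [Module R N]
    [AddCommGroup N'] [Module R N'] (e : N ≃ₗ[R] N') (h : Subsingleton (extM R n M N)) :
    Subsingleton (extM R n M N') := by
  rw [← ModuleCat.isZero_iff_subsingleton] at h ⊢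
  exact h.of_iso (((Ext R (ModuleCat R) n).obj _).mapIso e.toModuleIso.symm)

lemma subsingleton_extM_prod {N N' : Type u} [AddCommGroup N] [Module R N]
    [AddCommGroup N'] [Module R N'] (h : Subsingleton (extM R n M N))
    (h' : Subsingleton (extM R n M N')) : Subsingleton (extM R n M (N × N')) := by
  rw [← ModuleCat.isZero_iff_subsingleton] at h h' ⊢
  have hS := ModuleCat.shortComplex_shortExact
    (ModuleCat.shortComplexOfCompEqZero _ _ (LinearMap.snd_comp_inl R N N'))
    Function.Exact.inl_snd LinearMap.inl_injective LinearMap.snd_surjective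
  exact hS.isZero_Ext_X₂ _ n h h'

lemma subsingleton_extM_pi (h : Subsingleton (extM R n M R)) :
    ∀ c : ℕ, Subsingleton (extM R n M (Fin c → R))
  | 0 => ModuleCat.isZero_iff_subsingleton.1 <|
      isZero_Ext_of_isZero _ (ModuleCat.isZero_of_subsingleton _) n
  | c + 1 => subsingleton_extM_of_linearEquiv (Fin.consLinearEquiv R fun _ => R)
      (subsingleton_extM_prod h (subsingleton_extM_pi h c))

lemma subsingleton_extM_of_surjective {F N : Type u} [AddCommGroup F] [Module R F]
    [AddCommGroup N] [Module R N] (f : F →ₗ[R] N) (hf : Function.Surjective f)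
    (hF : Subsingleton (extM R n M F)) (hK : Subsingleton (extM R (n + 1) M (LinearMap.ker f))) :
    Subsingleton (extM R n M N) := by
  rw [← ModuleCat.isZero_iff_subsingleton] at hF hK ⊢
  exact (LinearMap.shortExact_shortComplexKer hf).isZero_Ext_X₃ _ n hF hK

lemma ProjDimLE.subsingleton_extM (hM : ProjDimLE R M n) (hR : Subsingleton (extM R n M R))
    (N : Type u) [AddCommGroup N] [Module R N] [Module.Finite R N] :
    Subsingleton (extM R n M N) := by
  obtain ⟨c, f, hf⟩ := Module.Finite.exists_fin' R N
  exact subsingleton_extM_of_surjective f hf (subsingleton_extM_pi hR c)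
    (hM _ (n + 1) n.lt_add_one)

lemma SatisfiesGARC.subsingleton_extM_self (h : SatisfiesGARC R) [Module.Finite R M]
    (hR : ∀ i > 0, Subsingleton (extM R i M R)) (m : ℕ)
    (hm : ∀ i > m + 1, Subsingleton (extM R i M M)) : Subsingleton (extM R (m + 1) M M) := by
  have hMR : ∀ i > m + 1, Subsingleton (extM R i M (M × R)) :=
    fun i hi => subsingleton_extM_prod (hm i hi) (hR i (by omega))
  exact (h M ‹_› (m + 1) hMR).subsingleton_extM (hR _ m.succ_pos) M

end ModuleExt

theorem sac_of_garc_general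
    (R : Type u) [CommRing R]
    (h : SatisfiesGARC R) :
    SatisfiesSAC R := by
  intro M _ _ _ hR ⟨n, hn⟩
  suffices ∀ m, (∀ i > m, Subsingleton (extM R i M M)) → ∀ i > 0, Subsingleton (extM R i M M) from
    this n hn
  intro m
  induction m with
  | zero => exact id
  | succ m ih =>
    intro hm
    refine ih fun i hi => ?_
    rcases (Nat.succ_le_of_lt hi).eq_or_lt with rfl | hi
    · exact h.subsingleton_extM_self hR m hm
    · exact hm i hi

/-- A Noetherian local ring satisfying (GARC) satisfies (SAC). -/
theorem sac_of_garc
    (R : Type u) [CommRing R] [IsNoetherianRing R] [IsLocalRing R]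
    (h : SatisfiesGARC R) :
    SatisfiesSAC R :=
  sac_of_garc_general R h
end

section
/- Let R be a Noetherian local ring. If R satisfies the condition (SAC), then R satisfies the condition (GARC). -/
/-!
Common definitions: Ext and Tor modules, depth, (maximal) Cohen-Macaulayness,
finite injective dimension, canonical modules, totally reflexive modules,
local freeness on the punctured spectrum, injective hulls of the residue field.
-/

open CategoryTheory TensorProduct IsLocalRing

universe u

/-!
Let `K k` be the `k`-th syzygy of `M` in a resolution `F` of `M` by finite free modules. Since
`Ext^{>n}(M, R) = 0`, dimension shifting gives `Ext^{>0}(K a, R) = 0` for `a ≥ n` and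
`Ext^{>n+b}(M, K b) = 0`, hence `Ext^{≫0}(Y, Y) = 0` for `Y = K n ⊕ K (n+1)`. By (SAC),
`Ext^1(Y, Y) = 0`; in particular `Ext^1(K n, K (n+1)) = 0`, so `0 → K (n+1) → F n → K n → 0`
splits, `K n` is projective and `pd M ≤ n`.

All Ext modules are computed from explicit projective resolutions: `Ext^{j+1}(A, N) = 0` iff
every `(j+1)`-cocycle `F (j+1) → N` is a coboundary.
-/

section HomExact

variable {R : Type*} [Ring R] {X Y Z : Type*}
  [AddCommGroup X] [Module R X] [AddCommGroup Y] [Module R Y] [AddCommGroup Z] [Module R Z]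

/-- `Hom(-, N)` is exact at `Hom(Y, N)` when applied to `X → Y → Z`. -/
def HomExact (f : X →ₗ[R] Y) (g : Y →ₗ[R] Z) (N : Type*) [AddCommGroup N] [Module R N] :
    Prop :=
  ∀ c : Y →ₗ[R] N, c ∘ₗ f = 0 → ∃ e : Z →ₗ[R] N, c = e ∘ₗ g

theorem homExact_prod_iff {f : X →ₗ[R] Y} {g : Y →ₗ[R] Z} {N₁ N₂ : Type*}
    [AddCommGroup N₁] [Module R N₁] [AddCommGroup N₂] [Module R N₂] :
    HomExact f g (N₁ × N₂) ↔ HomExact f g N₁ ∧ HomExact f g N₂ := by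
  refine ⟨fun h => ⟨fun c hc => ?_, fun c hc => ?_⟩, fun ⟨h₁, h₂⟩ c hc => ?_⟩
  · obtain ⟨e, he⟩ := h (LinearMap.inl R N₁ N₂ ∘ₗ c)
      (by rw [LinearMap.comp_assoc, hc]; simp)
    exact ⟨LinearMap.fst R N₁ N₂ ∘ₗ e, by ext x; simpa using congr(($he x).1)⟩
  · obtain ⟨e, he⟩ := h (LinearMap.inr R N₁ N₂ ∘ₗ c)
      (by rw [LinearMap.comp_assoc, hc]; simp)
    exact ⟨LinearMap.snd R N₁ N₂ ∘ₗ e, by ext x; simpa using congr(($he x).2)⟩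
  · obtain ⟨e₁, he₁⟩ := h₁ (LinearMap.fst R N₁ N₂ ∘ₗ c)
      (by rw [LinearMap.comp_assoc, hc]; simp)
    obtain ⟨e₂, he₂⟩ := h₂ (LinearMap.snd R N₁ N₂ ∘ₗ c)
      (by rw [LinearMap.comp_assoc, hc]; simp)
    exact ⟨e₁.prod e₂, LinearMap.ext fun y =>
      Prod.ext (by simpa using congr($he₁ y)) (by simpa using congr($he₂ y))⟩

theorem HomExact.pi {f : X →ₗ[R] Y} {g : Y →ₗ[R] Z} {ι : Type*} {N : ι → Type*}
    [∀ i, AddCommGroup (N i)] [∀ i, Module R (N i)] (h : ∀ i, HomExact f g (N i)) :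
    HomExact f g (∀ i, N i) := by
  intro c hc
  choose e he using fun i => h i (LinearMap.proj i ∘ₗ c)
    (by rw [LinearMap.comp_assoc, hc]; simp)
  exact ⟨LinearMap.pi e, by ext x i; exact congr($(he i) x)⟩

theorem homExact_prodMap_iff {X' Y' Z' N : Type*} [AddCommGroup X'] [Module R X']
    [AddCommGroup Y'] [Module R Y'] [AddCommGroup Z'] [Module R Z'] [AddCommGroup N] [Module R N]
    {f : X →ₗ[R] Y} {g : Y →ₗ[R] Z}
    {f' : X' →ₗ[R] Y'} {g' : Y' →ₗ[R] Z'} :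
    HomExact (f.prodMap f') (g.prodMap g') N ↔ HomExact f g N ∧ HomExact f' g' N := by
  refine ⟨fun h => ⟨fun c hc => ?_, fun c hc => ?_⟩, fun ⟨h₁, h₂⟩ c hc => ?_⟩
  · obtain ⟨e, he⟩ := h (c ∘ₗ LinearMap.fst R Y Y')
      (by ext <;> simp [← LinearMap.comp_apply, hc])
    exact ⟨e ∘ₗ LinearMap.inl R Z Z', by ext y; simpa using congr($he (y, 0))⟩
  · obtain ⟨e, he⟩ := h (c ∘ₗ LinearMap.snd R Y Y')
      (by ext <;> simp [← LinearMap.comp_apply, hc])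
    exact ⟨e ∘ₗ LinearMap.inr R Z Z', by ext y; simpa using congr($he (0, y))⟩
  · obtain ⟨e₁, he₁⟩ := h₁ (c ∘ₗ LinearMap.inl R Y Y')
      (by ext x; simpa using congr($hc (x, 0)))
    obtain ⟨e₂, he₂⟩ := h₂ (c ∘ₗ LinearMap.inr R Y Y')
      (by ext x; simpa using congr($hc (0, x)))
    refine ⟨e₁.coprod e₂, LinearMap.prod_ext ?_ ?_⟩
    · rw [he₁]; ext; simp
    · rw [he₂]; ext; simp

variable {W : Type*} [AddCommGroup W] [Module R W]
  {d₂ : W →ₗ[R] X} {d₁ : X →ₗ[R] Y} {d₀ : Y →ₗ[R] Z}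

theorem HomExact.ker_of_surjective [Module.Projective R Z] (hd : d₀ ∘ₗ d₁ = 0)
    {P K : Type*} [AddCommGroup P] [Module R P] [AddCommGroup K] [Module R K]
    {π : P →ₗ[R] K} (hπ : Function.Surjective π) (hP : HomExact d₂ d₁ P)
    (hK : HomExact d₁ d₀ K) : HomExact d₂ d₁ (LinearMap.ker π) := by
  intro c hc
  obtain ⟨e, he⟩ := hP ((LinearMap.ker π).subtype ∘ₗ c)
    (by rw [LinearMap.comp_assoc, hc]; simp)
  obtain ⟨f, hf⟩ := hK (π ∘ₗ e) (by rw [LinearMap.comp_assoc, ← he]; ext x; simp)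
  obtain ⟨g, hg⟩ := Module.projective_lifting_property π f hπ
  -- correcting `e` by the lift `g` of `f` makes it land in `ker π`
  refine ⟨(e - g ∘ₗ d₀).codRestrict (LinearMap.ker π) fun y => ?_, ?_⟩
  · have hfy : π (e y) = f (d₀ y) := congr($hf y)
    have hgy : π (g (d₀ y)) = f (d₀ y) := congr($hg (d₀ y))
    simp [hfy, hgy]
  · refine LinearMap.ext fun x => Subtype.ext ?_
    have hex : (c x : P) = e (d₁ x) := congr($he x)
    have hdx : d₀ (d₁ x) = 0 := congr($hd x)
    simp [hex, hdx]

theorem projective_of_homExact_ker {A : Type*} [AddCommGroup A] [Module R A]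
    [Module.Projective R Y] {π : Y →ₗ[R] A} (hd : d₁ ∘ₗ d₂ = 0)
    (hexact : Function.Exact d₁ π) (hπ : Function.Surjective π)
    (h : HomExact d₂ d₁ (LinearMap.ker π)) :
    Module.Projective R A := by
  obtain ⟨e, he⟩ := h (d₁.codRestrict (LinearMap.ker π) hexact.apply_apply_eq_zero)
    (LinearMap.ext fun x => Subtype.ext congr($hd x))
  have hretract : e ∘ₗ (LinearMap.ker π).subtype = LinearMap.id := by
    ext ⟨z, hz⟩
    obtain ⟨y, rfl⟩ := (hexact z).1 hz
    exact congr(Subtype.val ($he y)).symm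
  obtain ⟨s, hs⟩ : ∃ s, π ∘ₗ s = LinearMap.id :=
    (((LinearMap.exact_subtype_ker_map π).split_tfae (LinearMap.ker π).injective_subtype
      hπ).out 1 0 rfl rfl).1 ⟨e, hretract⟩
  exact (Module.Projective.iff_split_of_projective π hπ).2 ⟨s, hs⟩

end HomExact

theorem Function.Exact.linearMap_prodMap {R : Type*} [Ring R] {X Y Z X' Y' Z' : Type*}
    [AddCommGroup X] [Module R X] [AddCommGroup Y] [Module R Y] [AddCommGroup Z] [Module R Z]
    [AddCommGroup X'] [Module R X'] [AddCommGroup Y'] [Module R Y'] [AddCommGroup Z']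
    [Module R Z'] {f : X →ₗ[R] Y} {g : Y →ₗ[R] Z} {f' : X' →ₗ[R] Y'}
    {g' : Y' →ₗ[R] Z'} (h : Function.Exact f g) (h' : Function.Exact f' g') :
    Function.Exact (f.prodMap f') (g.prodMap g') := by
  rintro ⟨y, y'⟩
  simp [Prod.ext_iff, h y, h' y']

structure ProjRes (R : Type u) [Ring R] (A : Type u) [AddCommGroup A] [Module R A] where
  F : ℕ → ModuleCat.{u} R
  projective : ∀ j, Module.Projective R (F j)
  d : ∀ j, F (j + 1) →ₗ[R] F j
  π : F 0 →ₗ[R] A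
  π_surjective : Function.Surjective π
  exact_zero : Function.Exact (d 0) π
  exact : ∀ j, Function.Exact (d (j + 1)) (d j)

namespace ProjRes

attribute [instance] ProjRes.projective

section Ring

variable {R : Type u} [Ring R] {A : Type u} [AddCommGroup A] [Module R A]

theorem d_comp_d (r : ProjRes R A) (j : ℕ) : r.d j ∘ₗ r.d (j + 1) = 0 :=
  (r.exact j).linearMap_comp_eq_zero

noncomputable def complex (r : ProjRes R A) : ChainComplex (ModuleCat.{u} R) ℕ :=
  ChainComplex.of r.F (fun j => ModuleCat.ofHom (r.d j))
    (fun j => ModuleCat.hom_ext (r.d_comp_d j))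

theorem complex_d (r : ProjRes R A) (j : ℕ) :
    r.complex.d (j + 1) j = ModuleCat.ofHom (r.d j) := by
  simp [complex]

noncomputable def toProjectiveResolution (r : ProjRes R A) :
    ProjectiveResolution (ModuleCat.of R A) where
  complex := r.complex
  projective j := inferInstanceAs (Projective (r.F j))
  π := (ChainComplex.toSingle₀Equiv _ _).symm ⟨ModuleCat.ofHom r.π,
    by rw [complex_d]; exact ModuleCat.hom_ext r.exact_zero.linearMap_comp_eq_zero⟩
  quasiIso := ⟨fun n => by
    cases n with
    | zero =>
      rw [ChainComplex.quasiIsoAt₀_iff, ShortComplex.quasiIso_iff_of_zeros']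
      · exact ⟨(ShortComplex.moduleCat_exact_iff _).2 fun x hx => (r.exact_zero x).1 hx,
          (ModuleCat.epi_iff_surjective _).2 r.π_surjective⟩
      all_goals rfl
    | succ n =>
      rw [quasiIsoAt_iff_exactAt' _ _ (ChainComplex.exactAt_succ_single_obj _ _),
        HomologicalComplex.exactAt_iff' _ (n + 2) (n + 1) n (by simp) (by simp),
        ShortComplex.moduleCat_exact_iff]
      intro x hx
      simp only [HomologicalComplex.shortComplexFunctor'_obj_f,
        HomologicalComplex.shortComplexFunctor'_obj_g, complex_d] at hx ⊢
      exact (r.exact n x).1 hx⟩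

noncomputable def prod {A' : Type u} [AddCommGroup A'] [Module R A'] (r : ProjRes R A)
    (r' : ProjRes R A') : ProjRes R (A × A') where
  F j := ModuleCat.of R (r.F j × r'.F j)
  projective _ := inferInstance
  d j := (r.d j).prodMap (r'.d j)
  π := r.π.prodMap r'.π
  π_surjective := r.π_surjective.prodMap r'.π_surjective
  exact_zero := r.exact_zero.linearMap_prodMap r'.exact_zero
  exact j := (r.exact j).linearMap_prodMap (r'.exact j)

end Ring

variable {R : Type u} [CommRing R] {A : Type u} [AddCommGroup A] [Module R A]
  {N : Type u} [AddCommGroup N] [Module R N]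

theorem subsingleton_ext_succ_iff (r : ProjRes R A) (j : ℕ) :
    Subsingleton (extM R (j + 1) A N) ↔ HomExact (r.d (j + 1)) (r.d j) N := by
  rw [← ModuleCat.isZero_iff_subsingleton,
    Iso.isZero_iff (r.toProjectiveResolution.isoExt (R := R) (j + 1) (ModuleCat.of R N)),
    ← HomologicalComplex.exactAt_iff_isZero_homology,
    HomologicalComplex.exactAt_iff' _ j (j + 1) (j + 2) (by simp) (by simp),
    ShortComplex.moduleCat_exact_iff]
  simp only [HomologicalComplex.shortComplexFunctor'_obj_f,
    HomologicalComplex.shortComplexFunctor'_obj_g, ChainComplex.linearYonedaObj_d,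
    toProjectiveResolution, complex_d]
  constructor
  · rintro h c hc
    obtain ⟨e, he⟩ := h (ModuleCat.ofHom c) (ModuleCat.hom_ext hc)
    exact ⟨e.hom, (congrArg ModuleCat.Hom.hom he).symm⟩
  · rintro h c hc
    obtain ⟨e, he⟩ := h c.hom (congrArg ModuleCat.Hom.hom hc)
    exact ⟨ModuleCat.ofHom e, ModuleCat.hom_ext he.symm⟩

theorem subsingleton_ext_prod_right_iff (r : ProjRes R A) {N₁ N₂ : Type u} [AddCommGroup N₁]
    [Module R N₁] [AddCommGroup N₂] [Module R N₂] (j : ℕ) :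
    Subsingleton (extM R (j + 1) A (N₁ × N₂)) ↔
      Subsingleton (extM R (j + 1) A N₁) ∧ Subsingleton (extM R (j + 1) A N₂) := by
  simp only [r.subsingleton_ext_succ_iff, homExact_prod_iff]

theorem subsingleton_ext_prod_left_iff {A' : Type u} [AddCommGroup A'] [Module R A']
    (r : ProjRes R A) (r' : ProjRes R A') (j : ℕ) :
    Subsingleton (extM R (j + 1) (A × A') N) ↔
      Subsingleton (extM R (j + 1) A N) ∧ Subsingleton (extM R (j + 1) A' N) := by
  rw [(r.prod r').subsingleton_ext_succ_iff, r.subsingleton_ext_succ_iff,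
    r'.subsingleton_ext_succ_iff]
  exact homExact_prodMap_iff

theorem subsingleton_ext_pi (r : ProjRes R A) {ι : Type} {N : ι → Type u}
    [∀ i, AddCommGroup (N i)] [∀ i, Module R (N i)] {j : ℕ}
    (h : ∀ i, Subsingleton (extM R (j + 1) A (N i))) :
    Subsingleton (extM R (j + 1) A (∀ i, N i)) :=
  (r.subsingleton_ext_succ_iff j).2 (.pi fun i => (r.subsingleton_ext_succ_iff j).1 (h i))

/-- The long exact sequence of `Ext(A, -)` for `0 → ker π → P → K → 0`. -/
theorem subsingleton_ext_ker (r : ProjRes R A) {P K : Type u} [AddCommGroup P] [Module R P]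
    [AddCommGroup K] [Module R K] {π : P →ₗ[R] K} (hπ : Function.Surjective π) {j : ℕ}
    (hP : Subsingleton (extM R (j + 2) A P)) (hK : Subsingleton (extM R (j + 1) A K)) :
    Subsingleton (extM R (j + 2) A (LinearMap.ker π)) :=
  (r.subsingleton_ext_succ_iff (j + 1)).2 <|
    .ker_of_surjective (r.d_comp_d j) hπ ((r.subsingleton_ext_succ_iff (j + 1)).1 hP)
      ((r.subsingleton_ext_succ_iff j).1 hK)

theorem projective_of_subsingleton_ext_one_ker (r : ProjRes R A)
    (h : Subsingleton (extM R 1 A (LinearMap.ker r.π))) : Module.Projective R A :=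
  projective_of_homExact_ker (r.d_comp_d 0) r.exact_zero r.π_surjective
    ((r.subsingleton_ext_succ_iff 0).1 h)

end ProjRes

structure FGModule (R : Type u) [Ring R] where
  carrier : Type u
  [addCommGroup : AddCommGroup carrier]
  [module : Module R carrier]
  [finite : Module.Finite R carrier]

namespace FGModule

attribute [instance] addCommGroup module finite

section Ring

variable {R : Type u} [Ring R]

instance : CoeSort (FGModule R) (Type u) := ⟨carrier⟩

variable (M : FGModule R)

noncomputable def numGens : ℕ := (Module.Finite.exists_fin' R M).choose

noncomputable def cover : (Fin M.numGens → R) →ₗ[R] M :=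
  (Module.Finite.exists_fin' R M).choose_spec.choose

theorem cover_surjective : Function.Surjective M.cover :=
  (Module.Finite.exists_fin' R M).choose_spec.choose_spec

variable [IsNoetherianRing R]

noncomputable def syzygy : FGModule R := ⟨LinearMap.ker M.cover⟩

noncomputable def iterSyzygy : ℕ → FGModule R
  | 0 => M
  | k + 1 => (iterSyzygy k).syzygy

noncomputable def freeResD (k : ℕ) :
    (Fin (M.iterSyzygy (k + 1)).numGens → R) →ₗ[R] (Fin (M.iterSyzygy k).numGens → R) :=
  (LinearMap.ker (M.iterSyzygy k).cover).subtype ∘ₗ (M.iterSyzygy (k + 1)).cover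

theorem exact_freeResD_cover (k : ℕ) : Function.Exact (M.freeResD k) (M.iterSyzygy k).cover :=
  (cover_surjective _).comp_exact_iff_exact.2 (LinearMap.exact_subtype_ker_map _)

theorem exact_freeResD (k : ℕ) : Function.Exact (M.freeResD (k + 1)) (M.freeResD k) :=
  (LinearMap.ker (M.iterSyzygy k).cover).injective_subtype.comp_exact_iff_exact.2
    (M.exact_freeResD_cover (k + 1))

noncomputable def iterSyzygyRes (m : ℕ) : ProjRes R (M.iterSyzygy m) where
  F j := ModuleCat.of R (Fin (M.iterSyzygy (m + j)).numGens → R)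
  projective _ := inferInstance
  d j := M.freeResD (m + j)
  π := (M.iterSyzygy m).cover
  π_surjective := cover_surjective _
  exact_zero := M.exact_freeResD_cover m
  exact j := M.exact_freeResD (m + j)

end Ring

variable {R : Type u} [CommRing R] [IsNoetherianRing R] (M : FGModule R) {n : ℕ}

-- Stated for any `k = m + j`: at `m = 0` the index `0 + j` is not definitionally `j`.
theorem subsingleton_ext_iterSyzygy_iff_homExact {N : Type u} [AddCommGroup N] [Module R N]
    {m j k : ℕ} (hk : m + j = k) :
    Subsingleton (extM R (j + 1) (M.iterSyzygy m) N) ↔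
      HomExact (M.freeResD (k + 1)) (M.freeResD k) N := by
  subst hk
  exact (M.iterSyzygyRes m).subsingleton_ext_succ_iff j

theorem subsingleton_ext_iterSyzygy_iff {N : Type u} [AddCommGroup N] [Module R N] (m j : ℕ) :
    Subsingleton (extM R (j + 1) (M.iterSyzygy m) N) ↔ Subsingleton (extM R (m + j + 1) M N) :=
  (M.subsingleton_ext_iterSyzygy_iff_homExact rfl).trans
    (M.subsingleton_ext_iterSyzygy_iff_homExact (m := 0) (zero_add _)).symm

theorem subsingleton_ext_iterSyzygy_of_lt (hMM : ∀ i > n, Subsingleton (extM R i M M))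
    (hMR : ∀ i > n, Subsingleton (extM R i M R)) (b : ℕ) {i : ℕ} (hi : n + b < i) :
    Subsingleton (extM R i M (M.iterSyzygy b)) := by
  induction b generalizing i with
  | zero => exact hMM i hi
  | succ b ih =>
    obtain ⟨j, rfl⟩ := Nat.exists_eq_add_of_lt hi
    rw [show n + (b + 1) + j + 1 = n + b + j + 2 by omega]
    exact (M.iterSyzygyRes 0).subsingleton_ext_ker (cover_surjective _)
      ((M.iterSyzygyRes 0).subsingleton_ext_pi fun _ => hMR _ (by omega)) (ih (by omega))
theorem subsingleton_ext_one_iterSyzygy_of_satisfiesSAC (hSAC : SatisfiesSAC R)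
    (hMM : ∀ i > n, Subsingleton (extM R i M M)) (hMR : ∀ i > n, Subsingleton (extM R i M R)) :
    Subsingleton (extM R 1 (M.iterSyzygy n) (M.iterSyzygy (n + 1))) := by
  have hKK {a b j : ℕ} (h : n + b < a + j + 1) :
      Subsingleton (extM R (j + 1) (M.iterSyzygy a) (M.iterSyzygy b)) :=
    (M.subsingleton_ext_iterSyzygy_iff a j).2 (M.subsingleton_ext_iterSyzygy_of_lt hMM hMR b h)
  have hKR {a : ℕ} (ha : n ≤ a) (j : ℕ) : Subsingleton (extM R (j + 1) (M.iterSyzygy a) R) :=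
    (M.subsingleton_ext_iterSyzygy_iff a j).2 (hMR _ (by omega))
  have hYR : ∀ i > 0, Subsingleton (extM R i (M.iterSyzygy n × M.iterSyzygy (n + 1)) R) := by
    intro i hi
    obtain ⟨j, rfl⟩ := Nat.exists_eq_add_of_lt hi
    exact ((M.iterSyzygyRes n).subsingleton_ext_prod_left_iff (M.iterSyzygyRes (n + 1)) _).2
      ⟨hKR le_rfl _, hKR (by omega) _⟩
  have hYY : ∀ i > n + 1, Subsingleton (extM R i (M.iterSyzygy n × M.iterSyzygy (n + 1))
      (M.iterSyzygy n × M.iterSyzygy (n + 1))) := by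
    intro i hi
    obtain ⟨j, rfl⟩ := Nat.exists_eq_add_of_lt hi
    rw [(M.iterSyzygyRes n).subsingleton_ext_prod_left_iff (M.iterSyzygyRes (n + 1)),
      (M.iterSyzygyRes n).subsingleton_ext_prod_right_iff,
      (M.iterSyzygyRes (n + 1)).subsingleton_ext_prod_right_iff]
    exact ⟨⟨hKK (by omega), hKK (by omega)⟩, hKK (by omega), hKK (by omega)⟩
  have hY := hSAC _ inferInstance hYR ⟨n + 1, hYY⟩ 1 one_pos
  exact (((M.iterSyzygyRes n).subsingleton_ext_prod_right_iff 0).1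
    (((M.iterSyzygyRes n).subsingleton_ext_prod_left_iff (M.iterSyzygyRes (n + 1)) 0).1 hY).1).2

theorem projDimLE_of_projective_iterSyzygy [Module.Projective R (M.iterSyzygy n)] :
    ProjDimLE R M n := by
  intro N _ _ i hi
  obtain ⟨j, rfl⟩ := Nat.exists_eq_add_of_lt hi
  exact (M.subsingleton_ext_iterSyzygy_iff n j).1
    (ModuleCat.subsingleton_of_isZero (isZero_Ext_succ_of_projective _ _ j))

end FGModule

theorem garc_of_sac_general
    (R : Type u) [CommRing R] [IsNoetherianRing R]
    (h : SatisfiesSAC R) :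
    SatisfiesGARC R := by
  intro M _ _ _ n hM
  let T : FGModule R := ⟨M⟩
  have hT : ∀ i > n, Subsingleton (extM R i T T) ∧ Subsingleton (extM R i T R) := by
    intro i hi
    obtain ⟨j, rfl⟩ := Nat.exists_eq_add_of_lt hi
    exact ((T.iterSyzygyRes 0).subsingleton_ext_prod_right_iff _).1 (hM _ hi)
  have := (T.iterSyzygyRes n).projective_of_subsingleton_ext_one_ker
    (T.subsingleton_ext_one_iterSyzygy_of_satisfiesSAC h (fun i hi => (hT i hi).1)
      fun i hi => (hT i hi).2)
  exact T.projDimLE_of_projective_iterSyzygy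

/-- A Noetherian local ring satisfying (SAC) satisfies (GARC). -/
theorem garc_of_sac
    (R : Type u) [CommRing R] [IsNoetherianRing R] [IsLocalRing R]
    (h : SatisfiesSAC R) :
    SatisfiesGARC R :=
  garc_of_sac_general R h
end
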